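/- Let R be a 2-torsion free commutative ring with unity and let T_∞(R) be the algebra of upper triangular ℕ×ℕ matrices over R (functions f : ℕ×ℕ → R with f(i,j)=0 for i > j, under convolution). Then every commuting map θ on T_∞(R) is proper: θ(f) = λ·f + μ(f) for some λ ∈ R (acting as the scalar λ·1) and some R-linear map μ with values in the center of T_∞(R). -/

import Mathlib

/-!
Polarizing `[θ f, f] = 0` gives `θ f * g + θ g * f = f * θ g + g * θ f`. Evaluated entrywise on
two matrix units `e i j`, `e k l` this forces `θ (e i j) = λ • e i j + c • 1` with a single
`λ ∈ R`, which is carried from `e i j` to `e j l` and so on down the chain `e m (m + 1)`. Fed back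
with `g = e i j`, it shows that `θ f - λ • f` commutes with every matrix unit, and the only such
elements of `T_∞(R)` are the scalars.
-/

variable {R : Type*} [CommRing R]

/-- Membership in `T_∞(R) = I(ℕ,R)`: upper triangular `ℕ × ℕ` matrices. -/
def IsInc (f : ℕ → ℕ → R) : Prop := ∀ x y : ℕ, ¬ x ≤ y → f x y = 0

/-- The convolution product of `T_∞(R)`. -/
def conv (f g : ℕ → ℕ → R) : ℕ → ℕ → R :=
  fun x y => ∑ z ∈ Finset.Icc x y, f x z * g z y

/-- A central element of `T_∞(R)`. -/
def IsCentral (c : ℕ → ℕ → R) : Prop :=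
  IsInc c ∧ ∀ f, IsInc f → conv c f = conv f c

/-- A commuting map on `T_∞(R)`. -/
structure IsCommMap (θ : (ℕ → ℕ → R) → ℕ → ℕ → R) : Prop where
  map_inc : ∀ f, IsInc f → IsInc (θ f)
  map_add : ∀ f g, IsInc f → IsInc g → θ (f + g) = θ f + θ g
  map_smul : ∀ (r : R) (f), IsInc f → θ (r • f) = r • θ f
  comm : ∀ f, IsInc f → conv (θ f) f = conv f (θ f)

namespace IsInc

variable {f g : ℕ → ℕ → R}

theorem add (hf : IsInc f) (hg : IsInc g) : IsInc (f + g) := fun x y hxy => by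
  simp [hf x y hxy, hg x y hxy]

theorem sub (hf : IsInc f) (hg : IsInc g) : IsInc (f - g) := fun x y hxy => by
  simp [hf x y hxy, hg x y hxy]

theorem smul (r : R) (hf : IsInc f) : IsInc (r • f) := fun x y hxy => by
  simp [hf x y hxy]

end IsInc

namespace Tinfty

def single (i j : ℕ) : ℕ → ℕ → R := fun x y => if x = i ∧ y = j then 1 else 0

def one : ℕ → ℕ → R := fun x y => if x = y then 1 else 0

variable {f g h : ℕ → ℕ → R}

theorem isInc_single {i j : ℕ} (hij : i ≤ j) : IsInc (single i j : ℕ → ℕ → R) :=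
  fun _ _ hxy => if_neg fun ⟨hx, hy⟩ => hxy (hx ▸ hy ▸ hij)

theorem isInc_one : IsInc (one : ℕ → ℕ → R) := fun _ _ hxy => if_neg fun h => hxy h.le

theorem conv_add_left : conv (f + g) h = conv f h + conv g h := by
  ext x y; simp [conv, add_mul, Finset.sum_add_distrib]

theorem conv_add_right : conv f (g + h) = conv f g + conv f h := by
  ext x y; simp [conv, mul_add, Finset.sum_add_distrib]

theorem conv_sub_left : conv (f - g) h = conv f h - conv g h := by
  ext x y; simp [conv, sub_mul, Finset.sum_sub_distrib]

theorem conv_sub_right : conv f (g - h) = conv f g - conv f h := by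
  ext x y; simp [conv, mul_sub, Finset.sum_sub_distrib]

theorem conv_smul_left (r : R) : conv (r • f) g = r • conv f g := by
  ext x y; simp [conv, Finset.mul_sum, mul_assoc]

theorem conv_smul_right (r : R) : conv f (r • g) = r • conv f g := by
  ext x y; simp [conv, Finset.mul_sum, mul_left_comm]

theorem conv_single_apply (hf : IsInc f) {i j : ℕ} (hij : i ≤ j) (x y : ℕ) :
    conv f (single i j) x y = if y = j then f x i else 0 := by
  by_cases hy : y = j
  · subst hy
    by_cases hxi : x ≤ i
    · simp [conv, single, hxi, hij]
    · simp [conv, single, hf x i hxi]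
  · simp [conv, single, hy]

theorem single_conv_apply (hf : IsInc f) {i j : ℕ} (hij : i ≤ j) (x y : ℕ) :
    conv (single i j) f x y = if x = i then f j y else 0 := by
  by_cases hx : x = i
  · subst hx
    by_cases hjy : j ≤ y
    · simp [conv, single, hjy, hij]
    · simp [conv, single, hf j y hjy]
  · simp [conv, single, hx]

theorem conv_one (hf : IsInc f) : conv f one = f := by
  ext x y
  by_cases hxy : x ≤ y
  · simp [conv, one, hxy]
  · simp [conv, one, hf x y hxy]

theorem one_conv (hf : IsInc f) : conv one f = f := by
  ext x y
  by_cases hxy : x ≤ y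
  · simp [conv, one, hxy]
  · simp [conv, one, hf x y hxy]

theorem isCentral_smul_one (r : R) : IsCentral (r • one : ℕ → ℕ → R) :=
  ⟨IsInc.smul r isInc_one, fun f hf => by
    rw [conv_smul_left, conv_smul_right, conv_one hf, one_conv hf]⟩

theorem entry_eq_of_conv_single_comm {g : ℕ → ℕ → R} (hg : IsInc g) {i j : ℕ} (hij : i ≤ j)
    (h : conv g (single i j) = conv (single i j) g) (x y : ℕ) :
    (if y = j then g x i else 0) = if x = i then g j y else 0 := by
  rw [← conv_single_apply hg hij, ← single_conv_apply hg hij, h]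

theorem eq_smul_one_of_conv_single_comm {g : ℕ → ℕ → R} (hg : IsInc g)
    (h : ∀ i j, i ≤ j → conv g (single i j) = conv (single i j) g) : g = g 0 0 • one := by
  have entry := fun i j hij => entry_eq_of_conv_single_comm hg hij (h i j hij)
  ext x y
  by_cases hxy : x = y
  · subst hxy
    simpa [one] using (entry 0 x x.zero_le 0 x).symm
  · by_cases hle : x ≤ y
    · simpa [one, hxy] using entry y y le_rfl x y
    · simp [one, hxy, hg x y hle]

def scalarPart (θ : (ℕ → ℕ → R) → ℕ → ℕ → R) : R := θ (single 0 1) 0 1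

end Tinfty

namespace IsCommMap

open Tinfty

variable {θ : (ℕ → ℕ → R) → ℕ → ℕ → R} (hθ : IsCommMap θ)
include hθ

theorem conv_add_conv {f g : ℕ → ℕ → R} (hf : IsInc f) (hg : IsInc g) :
    conv (θ f) g + conv (θ g) f = conv f (θ g) + conv g (θ f) := by
  have hsum := hθ.comm (f + g) (hf.add hg)
  simp only [hθ.map_add f g hf hg, conv_add_left, conv_add_right] at hsum
  linear_combination (norm := abel) hsum - hθ.comm f hf - hθ.comm g hg

theorem single_single_entry {i j k l : ℕ} (hij : i ≤ j) (hkl : k ≤ l) (x y : ℕ) :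
    (if y = l then θ (single i j) x k else 0) + (if y = j then θ (single k l) x i else 0)
      = (if x = i then θ (single k l) j y else 0) + (if x = k then θ (single i j) l y else 0) := by
  have h := congrFun (congrFun (hθ.conv_add_conv (isInc_single hij) (isInc_single hkl)) x) y
  have hA := hθ.map_inc _ (isInc_single hij)
  have hB := hθ.map_inc _ (isInc_single hkl)
  simp only [Pi.add_apply] at h
  rwa [conv_single_apply hA hkl, conv_single_apply hB hij,
    single_conv_apply hB hij, single_conv_apply hA hkl] at h

theorem single_self_entry {i j : ℕ} (hij : i ≤ j) (x y : ℕ) :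
    (if y = j then θ (single i j) x i else 0) = if x = i then θ (single i j) j y else 0 :=
  entry_eq_of_conv_single_comm (hθ.map_inc _ (isInc_single hij)) hij
    (hθ.comm _ (isInc_single hij)) x y

theorem apply_single_of_ne {i j : ℕ} (hij : i ≤ j) {x y : ℕ} (hxy : x ≠ y)
    (hne : ¬(x = i ∧ y = j)) : θ (single i j) x y = 0 := by
  by_cases hle : x ≤ y
  swap
  · exact hθ.map_inc _ (isInc_single hij) x y hle
  by_cases hyj : y = j
  · subst hyj
    have hxi : x ≠ i := fun h => hne ⟨h, rfl⟩
    have h := hθ.single_single_entry hij (le_refl x) x y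
    have hx := hθ.single_self_entry (le_refl x) x i
    simp only [hxy.symm, hxi, Ne.symm hxi, if_true, if_false, zero_add] at h hx
    rw [← h, hx]
  · have h := hθ.single_single_entry hij (le_refl y) x y
    have hy := hθ.single_self_entry (le_refl y) j y
    simp only [hyj, hxy, Ne.symm hyj, if_true, if_false, add_zero] at h hy
    rw [h, hy, ite_self]

theorem apply_single_apply_eq_of_lt_of_lt {i j l : ℕ} (hij : i < j) (hjl : j < l) :
    θ (single i j) i j = θ (single j l) j l := by
  have h := hθ.single_single_entry hij.le hjl.le i l
  simpa [hjl.ne', hij.ne] using h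

theorem apply_single_apply_of_lt {i j : ℕ} (hij : i < j) :
    θ (single i j) i j = scalarPart θ := by
  have hsucc : ∀ m, θ (single m (m + 1)) m (m + 1) = scalarPart θ := by
    intro m
    induction m with
    | zero => rfl
    | succ n ih =>
      rw [← ih, hθ.apply_single_apply_eq_of_lt_of_lt n.lt_succ_self (n + 1).lt_succ_self]
  rw [hθ.apply_single_apply_eq_of_lt_of_lt hij j.lt_succ_self, hsucc]

theorem apply_single_diag {i j m l : ℕ} (hij : i ≤ j) (hml : m ≤ l) (hjl : j < l) :
    θ (single i j) m m = θ (single i j) l l + if m = i ∧ m = j then scalarPart θ else 0 := by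
  have h := hθ.single_single_entry hij hml m l
  simp only [hjl.ne', if_true, if_false, add_zero] at h
  rw [h, add_comm]
  congr 1
  by_cases hmi : m = i
  · subst hmi
    by_cases hmj : m = j
    · subst hmj
      simpa using hθ.apply_single_apply_of_lt hjl
    · simpa [hmj] using hθ.apply_single_of_ne hml hjl.ne (fun h => hmj h.1.symm)
  · simp [hmi]

theorem apply_single {i j : ℕ} (hij : i ≤ j) :
    θ (single i j) = scalarPart θ • single i j + θ (single i j) (j + 1) (j + 1) • one := by
  ext x y
  by_cases hxy : x = y
  · subst hxy
    have hx := hθ.apply_single_diag hij (le_max_left x j |>.trans (Nat.le_succ _))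
      (Nat.lt_succ_of_le (le_max_right x j))
    have hj := hθ.apply_single_diag hij (Nat.succ_le_succ (le_max_right x j))
      (Nat.lt_succ_of_le (le_max_right x j))
    simp only [Nat.succ_ne_self, and_false, if_false, add_zero] at hj
    rw [hx, ← hj]
    simp [single, one, add_comm]
  · by_cases hij' : x = i ∧ y = j
    · obtain ⟨rfl, rfl⟩ := hij'
      simp [hθ.apply_single_apply_of_lt (lt_of_le_of_ne hij hxy), single, one, hxy]
    · simp [hθ.apply_single_of_ne hij hxy hij', single, one, hxy, hij']

theorem conv_single_comm_sub_smul {f : ℕ → ℕ → R} (hf : IsInc f) {i j : ℕ} (hij : i ≤ j) :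
    conv (θ f - scalarPart θ • f) (single i j) = conv (single i j) (θ f - scalarPart θ • f) := by
  have h := hθ.conv_add_conv hf (isInc_single hij)
  rw [hθ.apply_single hij] at h
  simp only [conv_add_left, conv_add_right, conv_smul_left, conv_smul_right, conv_one hf,
    one_conv hf] at h
  simp only [conv_sub_left, conv_sub_right, conv_smul_left, conv_smul_right]
  linear_combination (norm := module) h

end IsCommMap

theorem Tinfty_commuting_proper_general
    (θ : (ℕ → ℕ → R) → ℕ → ℕ → R) (hθ : IsCommMap θ) :
    ∃ (l : R) (μ : (ℕ → ℕ → R) → ℕ → ℕ → R),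
      (∀ f, IsInc f → IsCentral (μ f)) ∧
      (∀ f g, IsInc f → IsInc g → μ (f + g) = μ f + μ g) ∧
      (∀ (r : R) (f), IsInc f → μ (r • f) = r • μ f) ∧
      ∀ f, IsInc f → θ f = l • f + μ f := by
  refine ⟨Tinfty.scalarPart θ, fun f => θ f - Tinfty.scalarPart θ • f, fun f hf => ?_,
    fun f g hf hg => ?_, fun r f hf => ?_, fun f _ => (add_sub_cancel _ _).symm⟩
  · have hμf : IsInc (θ f - Tinfty.scalarPart θ • f) := (hθ.map_inc f hf).sub (hf.smul _)
    dsimp only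
    rw [Tinfty.eq_smul_one_of_conv_single_comm hμf fun i j hij =>
      hθ.conv_single_comm_sub_smul hf hij]
    exact Tinfty.isCentral_smul_one _
  · simp only [hθ.map_add f g hf hg, smul_add]
    abel
  · simp only [hθ.map_smul r f hf, smul_sub, smul_comm r (Tinfty.scalarPart θ) f]

/-- for `R` `2`-torsion free, every commuting map `θ` on `T_∞(R)` is proper:
`θ(f) = λ • f + μ(f)` with `λ ∈ R` and `μ` `R`-linear with central values. -/
theorem Tinfty_commuting_proper (htf : ∀ a : R, a + a = 0 → a = 0)
    (θ : (ℕ → ℕ → R) → ℕ → ℕ → R) (hθ : IsCommMap θ) :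
    ∃ (l : R) (μ : (ℕ → ℕ → R) → ℕ → ℕ → R),
      (∀ f, IsInc f → IsCentral (μ f)) ∧
      (∀ f g, IsInc f → IsInc g → μ (f + g) = μ f + μ g) ∧
      (∀ (r : R) (f), IsInc f → μ (r • f) = r • μ f) ∧
      ∀ f, IsInc f → θ f = l • f + μ f :=
  Tinfty_commuting_proper_general θ hθ
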